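/- Every Schur function S_λ is a solution of the KP hierarchy: for τ = S_λ (equivalently, the fermionic vector |λ⟩), the bilinear identity ∑_{j ∈ Z + 1/2} ψ*_j |λ⟩ ⊗ ψ_{−j} |λ⟩ = 0 holds. -/

import Mathlib

open Classical

/-- The fermionic Fock space: formal ℚ-linear combinations of sequences of
half-integers (Maya diagrams `u₁ < u₂ < ⋯` are such sequences, indexed from 0). -/
def Fock : Type := (ℕ → ℚ) →₀ ℚ

noncomputable instance : AddCommGroup Fock := Finsupp.instAddCommGroup
noncomputable instance : Module ℚ Fock := Finsupp.module _ _

/-- Delete the i-th term of a sequence. -/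
def deleteIdx (i : ℕ) (u : ℕ → ℚ) : ℕ → ℚ :=
  fun k => if k < i then u k else u (k + 1)

/-- Insert the value `a` at position i of a sequence. -/
def insertIdx (i : ℕ) (a : ℚ) (u : ℕ → ℚ) : ℕ → ℚ :=
  fun k => if k < i then u k else if k = i then a else u (k - 1)

open Classical in
/-- The action of the fermion ψ_j on a basis Maya diagram: remove the stone at
position −j (with sign (−1)^{i−1} if it is the i-th stone), or 0. -/
noncomputable def psiVec (j : ℚ) (u : ℕ → ℚ) : Fock :=
  if h : ∃ i : ℕ, u i = -j then
    ((-1 : ℚ)) ^ (Nat.find h) • Finsupp.single (deleteIdx (Nat.find h) u) 1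
  else 0

open Classical in
/-- The action of the fermion ψ*_j on a basis Maya diagram: insert a stone at
position j between u_i and u_{i+1} (with sign (−1)^i), or 0. -/
noncomputable def psiStarVec (j : ℚ) (u : ℕ → ℚ) : Fock :=
  if ∃ i : ℕ, u i = j then 0
  else if h : ∃ i : ℕ, j < u i then
    ((-1 : ℚ)) ^ (Nat.find h) • Finsupp.single (insertIdx (Nat.find h) j u) 1
  else 0

/-- The fermion ψ_j as a linear operator on Fock space. -/
noncomputable def psiOp (j : ℚ) : Fock →ₗ[ℚ] Fock :=
  Finsupp.lsum ℚ fun u => LinearMap.toSpanSingleton ℚ Fock (psiVec j u)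

/-- The fermion ψ*_j as a linear operator on Fock space. -/
noncomputable def psiStarOp (j : ℚ) : Fock →ₗ[ℚ] Fock :=
  Finsupp.lsum ℚ fun u => LinearMap.toSpanSingleton ℚ Fock (psiStarVec j u)

/-- The charge-zero Maya diagram of a partition λ:
u_j = j + 1/2 − λ'_j (0-indexed), λ' the conjugate partition, so that
ψ_{−n−1/2} ψ*_{−m−1/2}|vac⟩ corresponds (up to sign) to the Frobenius
partition (n|m) as in the paper. -/
noncomputable def mayaOf (lam : YoungDiagram) : ℕ → ℚ :=
  fun j => (j : ℚ) + 1/2 - (lam.colLen j : ℚ)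

/-- The basis vector |λ⟩ of the charge-zero Fock space. -/
noncomputable def ket (lam : YoungDiagram) : Fock :=
  Finsupp.single (mayaOf lam) 1

open scoped TensorProduct

/-
For a single Maya diagram `u` every term of the bilinear identity vanishes: `ψ*_j` kills `|u⟩`
when position `j` is occupied, while `ψ_{-j}`, which removes the stone at `j`, kills `|u⟩` when
it is not.
-/

open TensorProduct

theorem psiOp_single (j : ℚ) (u : ℕ → ℚ) (c : ℚ) :
    psiOp j (Finsupp.single u c) = c • psiVec j u := by
  rw [psiOp]
  erw [Finsupp.lsum_single, LinearMap.toSpanSingleton_apply]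

theorem psiStarOp_single (j : ℚ) (u : ℕ → ℚ) (c : ℚ) :
    psiStarOp j (Finsupp.single u c) = c • psiStarVec j u := by
  rw [psiStarOp]
  erw [Finsupp.lsum_single, LinearMap.toSpanSingleton_apply]

theorem psiStarVec_eq_zero_of_mem {j : ℚ} {u : ℕ → ℚ} (h : ∃ i, u i = j) :
    psiStarVec j u = 0 :=
  if_pos h

theorem psiVec_neg_eq_zero_of_not_mem {j : ℚ} {u : ℕ → ℚ} (h : ¬∃ i, u i = j) :
    psiVec (-j) u = 0 :=
  dif_neg (by simpa using h)

theorem psiStarOp_single_tmul_psiOp_neg_single (j : ℚ) (u : ℕ → ℚ) (c : ℚ) :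
    psiStarOp j (Finsupp.single u c) ⊗ₜ[ℚ] psiOp (-j) (Finsupp.single u c) = 0 := by
  rw [psiStarOp_single, psiOp_single]
  by_cases h : ∃ i, u i = j
  · rw [psiStarVec_eq_zero_of_mem h, smul_zero, zero_tmul]
  · rw [psiVec_neg_eq_zero_of_not_mem h, smul_zero, tmul_zero]

theorem schur_function_solves_KP (lam : YoungDiagram) :
    ∑ᶠ m : ℤ, (psiStarOp ((m : ℚ) + 1/2) (ket lam)) ⊗ₜ[ℚ]
        (psiOp (-((m : ℚ) + 1/2)) (ket lam)) = (0 : Fock ⊗[ℚ] Fock) :=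
  finsum_eq_zero_of_forall_eq_zero fun m =>
    psiStarOp_single_tmul_psiOp_neg_single ((m : ℚ) + 1/2) (mayaOf lam) 1
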